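/- Consider the 4D linear system ẋ = Ax with A block diagonal: blocks ((-σ₁, ω₁),(-ω₁, -σ₁)) and ((-σ₂, ω₂),(-ω₂, -σ₂)), σ₁, σ₂ > 0. For any c₁, c₂ ∈ ℝ, the surface parametrized by f(u,v) = (u, v, r^{σ₂/σ₁}(c₁cos θ − c₂sin θ), r^{σ₂/σ₁}(c₁sin θ + c₂cos θ)) with r² = u² + v², θ = (ω₂/(2σ₁))·log(u²+v²), satisfies the invariance equation A·f(u,v) = (−σ₁u + ω₁v)·f_u + (−ω₁u − σ₁v)·f_v for all (u,v) ≠ (0,0). -/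
import Mathlib


open Matrix Real

set_option maxHeartbeats 1000000 in
/-- For the 4D block-diagonal linear system, the surfaces
f(u,v) = (u, v, r^{σ₂/σ₁}(c₁cosθ − c₂sinθ), r^{σ₂/σ₁}(c₁sinθ + c₂cosθ)),
θ = ω₂log(u²+v²)/(2σ₁), satisfy the invariance equation
A·f = (−σ₁u + ω₁v)·f_u + (−ω₁u − σ₁v)·f_v away from the origin. -/
theorem invariant_surface_family_4d
    (σ₁ σ₂ ω₁ ω₂ : ℝ) (hσ₁ : 0 < σ₁) (hσ₂ : 0 < σ₂)
    (A : Matrix (Fin 4) (Fin 4) ℝ)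
    (hA : A = !![-σ₁, ω₁, 0, 0; -ω₁, -σ₁, 0, 0; 0, 0, -σ₂, ω₂; 0, 0, -ω₂, -σ₂])
    (c₁ c₂ : ℝ)
    (F : ℝ × ℝ → (Fin 4 → ℝ))
    (hF : ∀ u v : ℝ, F (u, v) =
      ![u, v,
        (u ^ 2 + v ^ 2) ^ (σ₂ / (2 * σ₁)) *
          (c₁ * Real.cos (ω₂ * Real.log (u ^ 2 + v ^ 2) / (2 * σ₁)) -
           c₂ * Real.sin (ω₂ * Real.log (u ^ 2 + v ^ 2) / (2 * σ₁))),
        (u ^ 2 + v ^ 2) ^ (σ₂ / (2 * σ₁)) *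
          (c₁ * Real.sin (ω₂ * Real.log (u ^ 2 + v ^ 2) / (2 * σ₁)) +
           c₂ * Real.cos (ω₂ * Real.log (u ^ 2 + v ^ 2) / (2 * σ₁)))]) :
    ∀ u v : ℝ, (u, v) ≠ (0, 0) →
      A.mulVec (F (u, v)) =
        (-σ₁ * u + ω₁ * v) • fderiv ℝ F (u, v) (1, 0) +
        (-ω₁ * u - σ₁ * v) • fderiv ℝ F (u, v) (0, 1) := by
  intro u v huv
  have hs : 0 < u ^ 2 + v ^ 2 := by
    rcases eq_or_ne u 0 with hu | hu
    · have hv : v ≠ 0 := fun hv => huv (by simp [hu, hv])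
      positivity
    · positivity
  have hsne : (u ^ 2 + v ^ 2) ≠ 0 := hs.ne'
  -- rewrite F as an explicit function
  have hFG : F = fun x : ℝ × ℝ =>
      ![x.1, x.2,
        (x.1 ^ 2 + x.2 ^ 2) ^ (σ₂ / (2 * σ₁)) *
          (c₁ * Real.cos (ω₂ * Real.log (x.1 ^ 2 + x.2 ^ 2) / (2 * σ₁)) -
           c₂ * Real.sin (ω₂ * Real.log (x.1 ^ 2 + x.2 ^ 2) / (2 * σ₁))),
        (x.1 ^ 2 + x.2 ^ 2) ^ (σ₂ / (2 * σ₁)) *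
          (c₁ * Real.sin (ω₂ * Real.log (x.1 ^ 2 + x.2 ^ 2) / (2 * σ₁)) +
           c₂ * Real.cos (ω₂ * Real.log (x.1 ^ 2 + x.2 ^ 2) / (2 * σ₁)))] := by
    funext x
    obtain ⟨a, b⟩ := x
    exact hF a b
  -- derivative of g(x) = x.1^2 + x.2^2
  have h1 : HasFDerivAt (fun x : ℝ × ℝ => x.1) (ContinuousLinearMap.fst ℝ ℝ ℝ) (u, v) :=
    hasFDerivAt_fst
  have h2 : HasFDerivAt (fun x : ℝ × ℝ => x.2) (ContinuousLinearMap.snd ℝ ℝ ℝ) (u, v) :=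
    hasFDerivAt_snd
  have hgeq : (fun x : ℝ × ℝ => x.1 ^ 2 + x.2 ^ 2) = fun x : ℝ × ℝ => x.1 * x.1 + x.2 * x.2 := by
    funext x; ring
  have hg : HasFDerivAt (fun x : ℝ × ℝ => x.1 ^ 2 + x.2 ^ 2)
      ((u • ContinuousLinearMap.fst ℝ ℝ ℝ + u • ContinuousLinearMap.fst ℝ ℝ ℝ) +
       (v • ContinuousLinearMap.snd ℝ ℝ ℝ + v • ContinuousLinearMap.snd ℝ ℝ ℝ)) (u, v) := by
    rw [hgeq]
    exact (h1.mul h1).add (h2.mul h2)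
  -- 1D derivatives at s = u^2+v^2
  have hθ : HasDerivAt (fun t : ℝ => ω₂ * Real.log t / (2 * σ₁)) (ω₂ * (u ^ 2 + v ^ 2)⁻¹ / (2 * σ₁)) (u ^ 2 + v ^ 2) :=
    (HasDerivAt.const_mul ω₂ (Real.hasDerivAt_log hsne)).div_const (2 * σ₁)
  have hrp : HasDerivAt (fun t : ℝ => t ^ (σ₂ / (2 * σ₁)))
      (σ₂ / (2 * σ₁) * (u ^ 2 + v ^ 2) ^ (σ₂ / (2 * σ₁) - 1)) (u ^ 2 + v ^ 2) :=
    Real.hasDerivAt_rpow_const (Or.inl hsne)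
  have hcos := hθ.cos
  have hsin := hθ.sin
  have hφ := hrp.mul ((HasDerivAt.const_mul c₁ hcos).sub (HasDerivAt.const_mul c₂ hsin))
  have hψ := hrp.mul ((HasDerivAt.const_mul c₁ hsin).add (HasDerivAt.const_mul c₂ hcos))
  have hΦ2 := HasDerivAt.comp_hasFDerivAt (u, v) hφ hg
  have hΦ3 := HasDerivAt.comp_hasFDerivAt (u, v) hψ hg
  have hFD : HasFDerivAt F
      (ContinuousLinearMap.pi
        ![ContinuousLinearMap.fst ℝ ℝ ℝ, ContinuousLinearMap.snd ℝ ℝ ℝ,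
          (σ₂ / (2 * σ₁) * (u ^ 2 + v ^ 2) ^ (σ₂ / (2 * σ₁) - 1) *
              (c₁ * Real.cos (ω₂ * Real.log (u ^ 2 + v ^ 2) / (2 * σ₁)) -
               c₂ * Real.sin (ω₂ * Real.log (u ^ 2 + v ^ 2) / (2 * σ₁))) +
            (u ^ 2 + v ^ 2) ^ (σ₂ / (2 * σ₁)) *
              (c₁ * (-Real.sin (ω₂ * Real.log (u ^ 2 + v ^ 2) / (2 * σ₁)) * (ω₂ * (u ^ 2 + v ^ 2)⁻¹ / (2 * σ₁))) -
               c₂ * (Real.cos (ω₂ * Real.log (u ^ 2 + v ^ 2) / (2 * σ₁)) * (ω₂ * (u ^ 2 + v ^ 2)⁻¹ / (2 * σ₁))))) •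
            ((u • ContinuousLinearMap.fst ℝ ℝ ℝ + u • ContinuousLinearMap.fst ℝ ℝ ℝ) +
             (v • ContinuousLinearMap.snd ℝ ℝ ℝ + v • ContinuousLinearMap.snd ℝ ℝ ℝ)),
          (σ₂ / (2 * σ₁) * (u ^ 2 + v ^ 2) ^ (σ₂ / (2 * σ₁) - 1) *
              (c₁ * Real.sin (ω₂ * Real.log (u ^ 2 + v ^ 2) / (2 * σ₁)) +
               c₂ * Real.cos (ω₂ * Real.log (u ^ 2 + v ^ 2) / (2 * σ₁))) +
            (u ^ 2 + v ^ 2) ^ (σ₂ / (2 * σ₁)) *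
              (c₁ * (Real.cos (ω₂ * Real.log (u ^ 2 + v ^ 2) / (2 * σ₁)) * (ω₂ * (u ^ 2 + v ^ 2)⁻¹ / (2 * σ₁))) +
               c₂ * (-Real.sin (ω₂ * Real.log (u ^ 2 + v ^ 2) / (2 * σ₁)) * (ω₂ * (u ^ 2 + v ^ 2)⁻¹ / (2 * σ₁))))) •
            ((u • ContinuousLinearMap.fst ℝ ℝ ℝ + u • ContinuousLinearMap.fst ℝ ℝ ℝ) +
             (v • ContinuousLinearMap.snd ℝ ℝ ℝ + v • ContinuousLinearMap.snd ℝ ℝ ℝ))])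
      (u, v) := by
    rw [hFG]
    apply hasFDerivAt_pi.2
    intro i
    fin_cases i
    · exact h1
    · exact h2
    · exact hΦ2
    · exact hΦ3
  have hpow : (u ^ 2 + v ^ 2) ^ (σ₂ / (2 * σ₁) - 1) = (u ^ 2 + v ^ 2) ^ (σ₂ / (2 * σ₁)) * (u ^ 2 + v ^ 2)⁻¹ := by
    rw [Real.rpow_sub hs, Real.rpow_one, div_eq_mul_inv]
  have h2σ₁ : (2 * σ₁) ≠ 0 := by positivity
  have hsne' : (u ^ 2 + v ^ 2) ≠ 0 := hsne
  have e1 : fderiv ℝ F (u, v) (1, 0) =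
      ![1, 0,
        2 * u * ((u ^ 2 + v ^ 2) ^ (σ₂ / (2 * σ₁)) * (u ^ 2 + v ^ 2)⁻¹ *
          (σ₂ / (2 * σ₁) * (c₁ * Real.cos (ω₂ * Real.log (u ^ 2 + v ^ 2) / (2 * σ₁)) -
              c₂ * Real.sin (ω₂ * Real.log (u ^ 2 + v ^ 2) / (2 * σ₁))) -
            ω₂ / (2 * σ₁) * (c₁ * Real.sin (ω₂ * Real.log (u ^ 2 + v ^ 2) / (2 * σ₁)) +
              c₂ * Real.cos (ω₂ * Real.log (u ^ 2 + v ^ 2) / (2 * σ₁))))),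
        2 * u * ((u ^ 2 + v ^ 2) ^ (σ₂ / (2 * σ₁)) * (u ^ 2 + v ^ 2)⁻¹ *
          (σ₂ / (2 * σ₁) * (c₁ * Real.sin (ω₂ * Real.log (u ^ 2 + v ^ 2) / (2 * σ₁)) +
              c₂ * Real.cos (ω₂ * Real.log (u ^ 2 + v ^ 2) / (2 * σ₁))) +
            ω₂ / (2 * σ₁) * (c₁ * Real.cos (ω₂ * Real.log (u ^ 2 + v ^ 2) / (2 * σ₁)) -
              c₂ * Real.sin (ω₂ * Real.log (u ^ 2 + v ^ 2) / (2 * σ₁)))))] := by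
    rw [hFD.fderiv]
    funext i
    fin_cases i
    · simp
    · simp
    · simp [hpow]
      field_simp
      ring
    · simp [hpow]
      field_simp
      ring
  have e2 : fderiv ℝ F (u, v) (0, 1) =
      ![0, 1,
        2 * v * ((u ^ 2 + v ^ 2) ^ (σ₂ / (2 * σ₁)) * (u ^ 2 + v ^ 2)⁻¹ *
          (σ₂ / (2 * σ₁) * (c₁ * Real.cos (ω₂ * Real.log (u ^ 2 + v ^ 2) / (2 * σ₁)) -
              c₂ * Real.sin (ω₂ * Real.log (u ^ 2 + v ^ 2) / (2 * σ₁))) -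
            ω₂ / (2 * σ₁) * (c₁ * Real.sin (ω₂ * Real.log (u ^ 2 + v ^ 2) / (2 * σ₁)) +
              c₂ * Real.cos (ω₂ * Real.log (u ^ 2 + v ^ 2) / (2 * σ₁))))),
        2 * v * ((u ^ 2 + v ^ 2) ^ (σ₂ / (2 * σ₁)) * (u ^ 2 + v ^ 2)⁻¹ *
          (σ₂ / (2 * σ₁) * (c₁ * Real.sin (ω₂ * Real.log (u ^ 2 + v ^ 2) / (2 * σ₁)) +
              c₂ * Real.cos (ω₂ * Real.log (u ^ 2 + v ^ 2) / (2 * σ₁))) +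
            ω₂ / (2 * σ₁) * (c₁ * Real.cos (ω₂ * Real.log (u ^ 2 + v ^ 2) / (2 * σ₁)) -
              c₂ * Real.sin (ω₂ * Real.log (u ^ 2 + v ^ 2) / (2 * σ₁)))))] := by
    rw [hFD.fderiv]
    funext i
    fin_cases i
    · simp
    · simp
    · simp [hpow]
      field_simp
      ring
    · simp [hpow]
      field_simp
      ring
  clear hFD hΦ2 hΦ3 hφ hψ hcos hsin hrp hθ hg hgeq h1 h2 hFG
  rw [hA, hF, e1, e2]
  funext i
  fin_cases i
  · simp [Matrix.mulVec, dotProduct, Fin.sum_univ_four]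
  · simp [Matrix.mulVec, dotProduct, Fin.sum_univ_four]
    ring
  · simp [Matrix.mulVec, dotProduct, Fin.sum_univ_four]
    field_simp
    ring
  · simp [Matrix.mulVec, dotProduct, Fin.sum_univ_four]
    field_simp
    ring
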